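/- arXiv:0803.2174 — 2 statements merged into one kernel-verified Lean document; each statement's English description precedes it below -/
import Mathlib

section
/- Let 0 < θ < π/4 and t ≥ 1/(cos θ − sin θ). Let u, v, z be three points in ℝ^d with angle ∠vuz ≤ θ and |uz| ≤ |uv|. Then |uz| + t·|zv| ≤ t·|uv|. -/
/-!
By the law of cosines, with `a = |uz|`, `b = |uv|`, `c = |zv|` and `α = ∠vuz`,
`c² = (b - a cos α)² + (a sin α)²`, so `c ≤ b - a (cos α - sin α)` once `a ≤ b`.
For `0 ≤ α ≤ θ < π/4` we have `cos α - sin α ≥ cos θ - sin θ > 0`, and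
`t (cos θ - sin θ) ≥ 1` then turns `t c ≤ t b - t a (cos θ - sin θ)` into `a + t c ≤ t b`.
-/

open Real EuclideanGeometry

lemma Real.cos_sub_sin_pos {θ : ℝ} (h₀ : 0 ≤ θ) (h₁ : θ < π / 4) : 0 < cos θ - sin θ := by
  have hsin : sin θ < sin (π / 4) :=
    sin_lt_sin_of_lt_of_le_pi_div_two (by linarith [pi_pos]) (by linarith [pi_pos]) h₁
  have hcos : cos (π / 4) < cos θ :=
    cos_lt_cos_of_nonneg_of_le_pi h₀ (by linarith [pi_pos]) h₁
  rw [sin_pi_div_four] at hsin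
  rw [cos_pi_div_four] at hcos
  linarith

lemma Real.cos_sub_sin_le_cos_sub_sin {α θ : ℝ} (h₀ : 0 ≤ α) (hαθ : α ≤ θ) (h₁ : θ ≤ π / 2) :
    cos θ - sin θ ≤ cos α - sin α := by
  have hcos : cos θ ≤ cos α := cos_le_cos_of_nonneg_of_le_pi h₀ (by linarith [pi_pos]) hαθ
  have hsin : sin α ≤ sin θ :=
    sin_le_sin_of_le_of_le_pi_div_two (by linarith [pi_pos]) h₁ hαθ
  linarith

namespace EuclideanGeometry

variable {V P : Type*} [NormedAddCommGroup V] [InnerProductSpace ℝ V] [MetricSpace P]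
  [NormedAddTorsor V P]

lemma dist_sq_eq_sub_mul_cos_sq_add_mul_sin_sq (u v z : P) :
    dist z v ^ 2 = (dist u v - dist u z * cos (∠ v u z)) ^ 2 + (dist u z * sin (∠ v u z)) ^ 2 := by
  have hlaw := law_cos v u z
  rw [dist_comm v z, dist_comm v u, dist_comm z u] at hlaw
  linear_combination hlaw - dist u z ^ 2 * sin_sq_add_cos_sq (∠ v u z)

lemma dist_add_mul_cos_sub_sin_le {u v z : P} (h : dist u z ≤ dist u v) :
    dist z v + dist u z * (cos (∠ v u z) - sin (∠ v u z)) ≤ dist u v := by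
  have hx : 0 ≤ dist u v - dist u z * cos (∠ v u z) := by
    nlinarith [cos_le_one (∠ v u z), dist_nonneg (x := u) (y := z)]
  have hy : 0 ≤ dist u z * sin (∠ v u z) :=
    mul_nonneg dist_nonneg (sin_nonneg_of_nonneg_of_le_pi (angle_nonneg v u z) (angle_le_pi v u z))
  have hsq : dist z v ^ 2 ≤ (dist u v - dist u z * cos (∠ v u z) + dist u z * sin (∠ v u z)) ^ 2 := by
    rw [dist_sq_eq_sub_mul_cos_sq_add_mul_sin_sq u]
    nlinarith [mul_nonneg hx hy]
  have := (pow_le_pow_iff_left₀ dist_nonneg (add_nonneg hx hy) two_ne_zero).mp hsq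
  linarith

end EuclideanGeometry

theorem czumaj_zhao_general (d : ℕ) (θ t : ℝ) (hθ1 : θ < Real.pi / 4)
    (ht : t ≥ 1 / (Real.cos θ - Real.sin θ))
    (u v z : EuclideanSpace ℝ (Fin d))
    (hangle : EuclideanGeometry.angle v u z ≤ θ)
    (hle : dist u z ≤ dist u v) :
    dist u z + t * dist z v ≤ t * dist u v := by
  have hα : 0 ≤ ∠ v u z := angle_nonneg v u z
  have hD : 0 < cos θ - sin θ := cos_sub_sin_pos (hα.trans hangle) hθ1
  have htD : 1 ≤ t * (cos θ - sin θ) := by rwa [ge_iff_le, div_le_iff₀ hD] at ht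
  have ht0 : 0 ≤ t := nonneg_of_mul_nonneg_left (zero_le_one.trans htD) hD
  have hmono : cos θ - sin θ ≤ cos (∠ v u z) - sin (∠ v u z) :=
    cos_sub_sin_le_cos_sub_sin hα hangle (by linarith [pi_pos])
  calc dist u z + t * dist z v
      ≤ dist u z * (t * (cos θ - sin θ)) + t * dist z v := by
        gcongr; exact le_mul_of_one_le_right dist_nonneg htD
    _ ≤ t * (dist z v + dist u z * (cos (∠ v u z) - sin (∠ v u z))) := by
        have := mul_le_mul_of_nonneg_left hmono (mul_nonneg ht0 (dist_nonneg (x := u) (y := z)))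
        linarith
    _ ≤ t * dist u v := mul_le_mul_of_nonneg_left (dist_add_mul_cos_sub_sin_le hle) ht0

/-- Czumaj–Zhao inequality: if `0 < θ < π/4`, `t ≥ 1/(cos θ − sin θ)`,
`∠ v u z ≤ θ` and `|uz| ≤ |uv|`, then `|uz| + t·|zv| ≤ t·|uv|`. -/
theorem czumaj_zhao (d : ℕ) (θ t : ℝ) (hθ0 : 0 < θ) (hθ1 : θ < Real.pi / 4)
    (ht : t ≥ 1 / (Real.cos θ - Real.sin θ))
    (u v z : EuclideanSpace ℝ (Fin d))
    (hangle : EuclideanGeometry.angle v u z ≤ θ)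
    (hle : dist u z ≤ dist u v) :
    dist u z + t * dist z v ≤ t * dist u v :=
  czumaj_zhao_general d θ t hθ1 ht u v z hangle hle
end

section
/- Let t > 1, t₁ ∈ (1, t), and 0 < δ ≤ (t − t₁)/4. Suppose x, y, u, v, a, b are vertices of a weighted graph G'_i such that: sp_{G'_i}(a,x) + sp_{G'_i}(b,y) ≤ t·|xy| − t·|uv| + 2δW, sp_{G'_i}(a,u) ≤ δW, sp_{G'_i}(v,b) ≤ δW, sp_{G'_i}(u,v) ≤ t₁·|uv|, and |uv| > W for some W > 0. Then sp_{G'_i}(x,y) < t·|xy|. -/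
/-!
Route the path from `x` to `y` through `a`, `u`, `v`, `b`. The two cluster radii and the slack
in the selection inequality cost `4δW` in total, while replacing `t·|uv|` by the `t₁`-spanner
bound for `{u,v}` saves `(t - t₁)·|uv|`; since `4δ ≤ t - t₁` and `W < |uv|`, the saving wins.
-/

theorem le_detour_of_triangle {V : Type*} (sp : V → V → ℝ)
    (htri : ∀ a b c : V, sp a c ≤ sp a b + sp b c) (x a u v b y : V) :
    sp x y ≤ sp x a + sp a u + sp u v + sp v b + sp b y := by
  linarith [htri x a y, htri a u y, htri u v y, htri v b y]

theorem four_mul_mul_lt_of_le_div_four {s δ W d : ℝ} (hs : 0 < s) (hδ : δ ≤ s / 4)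
    (hW : 0 < W) (hWd : W < d) :
    4 * δ * W < s * d :=
  calc 4 * δ * W ≤ s * W := by gcongr; linarith
    _ < s * d := by gcongr

theorem spanner_key_step_general
    (V : Type*) (sp : V → V → ℝ)
    (hsym : ∀ a b : V, sp a b = sp b a)
    (htri : ∀ a b c : V, sp a c ≤ sp a b + sp b c)
    (t t₁ δ W dxy duv : ℝ)
    (ht₁t : t₁ < t)
    (hδ : δ ≤ (t - t₁) / 4)
    (hW : 0 < W)
    (x y u v a b : V)
    (h1 : sp a x + sp b y ≤ t * dxy - t * duv + 2 * δ * W)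
    (h2 : sp a u ≤ δ * W)
    (h3 : sp v b ≤ δ * W)
    (h4 : sp u v ≤ t₁ * duv)
    (h5 : W < duv) :
    sp x y < t * dxy := by
  have hsaving := four_mul_mul_lt_of_le_div_four (sub_pos.2 ht₁t) hδ hW h5
  calc sp x y ≤ sp a x + sp a u + sp u v + sp v b + sp b y := by
        simpa only [hsym x a] using le_detour_of_triangle sp htri x a u v b y
    _ ≤ t * dxy + 4 * δ * W - (t - t₁) * duv := by linarith
    _ < t * dxy := by linarith

/-- Key arithmetic step in the `t`-spanner proof: combining the cluster radius
bounds with the query-edge selection inequality and a `t₁`-spanner path for the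
query edge `{u,v}` yields a `t`-spanner path for `{x,y}`. -/
theorem spanner_key_step
    (V : Type*) (sp : V → V → ℝ)
    (hsym : ∀ a b : V, sp a b = sp b a)
    (htri : ∀ a b c : V, sp a c ≤ sp a b + sp b c)
    (t t₁ δ W dxy duv : ℝ)
    (ht : 1 < t) (ht₁ : 1 < t₁) (ht₁t : t₁ < t)
    (hδ0 : 0 < δ) (hδ : δ ≤ (t - t₁) / 4)
    (hW : 0 < W) (hdxy : 0 < dxy)
    (x y u v a b : V)
    (h1 : sp a x + sp b y ≤ t * dxy - t * duv + 2 * δ * W)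
    (h2 : sp a u ≤ δ * W)
    (h3 : sp v b ≤ δ * W)
    (h4 : sp u v ≤ t₁ * duv)
    (h5 : W < duv) :
    sp x y < t * dxy :=
  spanner_key_step_general V sp hsym htri t t₁ δ W dxy duv ht₁t hδ hW x y u v a b h1 h2 h3 h4 h5
end
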